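/- Let (Ω, F, μ) be a probability space with a filtration 𝒻 indexed by ℕ, T a finite horizon, and Z : ℕ → Ω → ℝ an adapted process with each Z t bounded and measurable. Let U be the Snell envelope of Z. Fix t ≤ T and define τ*(ω) = min{s | t ≤ s ≤ T and U s ω = Z s ω} (this set is nonempty since U T = Z T). Then τ* is a stopping time with respect to 𝒻, t ≤ τ* ≤ T, and μ[Z_{τ*} | 𝒻 t] = U t almost everywhere; in particular τ* attains the supremum of μ[Z_τ | 𝒻 t] over all stopping times τ with t ≤ τ ≤ T. -/

import Mathlib

open MeasureTheory

/-! Continue the envelope constantly after `T` and take its Doob decomposition `U = M + A`: the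
increments of the predictable part `A` are `μ[U (s + 1) | 𝒻 s] - U s ≤ 0`, and they vanish as long
as `U s ≠ Z s`. Optional sampling for the martingale `M` turns `μ[U_τ | 𝒻 t]` into
`U t + μ[A_τ - A_t | 𝒻 t]` for every stopping time `t ≤ τ ≤ T`. The correction is `≤ 0` in general
and `0` for `τ*`, the first time `U` touches `Z`; with `Z ≤ U` this gives both optimality claims. -/

namespace MeasureTheory

variable {Ω E : Type*} {mΩ : MeasurableSpace Ω} {μ : Measure Ω} [NormedAddCommGroup E]
  [NormedSpace ℝ E] {𝒻 : Filtration ℕ mΩ} {τ : Ω → ℕ} {t T : ℕ}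

theorem Martingale.condExp_stoppedValue_ae_eq_of_const_le [IsFiniteMeasure μ]
    [CompleteSpace E] {M : ℕ → Ω → E} (hM : Martingale M 𝒻 μ)
    (hτ : IsStoppingTime 𝒻 (fun ω => (τ ω : WithTop ℕ)))
    (htτ : ∀ ω, t ≤ τ ω) (hτT : ∀ ω, τ ω ≤ T) :
    μ[fun ω => M (τ ω) ω | 𝒻 t] =ᵐ[μ] M t := by
  have h := hM.stoppedValue_ae_eq_condExp_of_le hτ (isStoppingTime_const 𝒻 t)
    (fun ω => WithTop.coe_le_coe.mpr (htτ ω)) (n := T) (fun ω => WithTop.coe_le_coe.mpr (hτT ω))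
  rw [IsStoppingTime.measurableSpace_const] at h
  exact h.symm

theorem integrable_predictablePart [CompleteSpace E] {f : ℕ → Ω → E} (n : ℕ) :
    Integrable (predictablePart f 𝒻 μ n) μ :=
  integrable_finsetSum' _ fun _ _ => integrable_condExp

theorem predictablePart_sub_eq_sum_Ico {f : ℕ → Ω → E} {m n : ℕ} (hmn : m ≤ n)
    (ω : Ω) : predictablePart f 𝒻 μ n ω - predictablePart f 𝒻 μ m ω =
      ∑ i ∈ Finset.Ico m n, μ[f (i + 1) - f i | 𝒻 i] ω := by
  simp only [predictablePart, Finset.sum_apply, Finset.sum_Ico_eq_sub _ hmn]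

variable [IsFiniteMeasure μ] [CompleteSpace E] {f : ℕ → Ω → E}

theorem condExp_stoppedValue_ae_eq_martingalePart_add
    (hf : StronglyAdapted 𝒻 f) (hint : ∀ n, Integrable (f n) μ)
    (hτ : IsStoppingTime 𝒻 (fun ω => (τ ω : WithTop ℕ))) (htτ : ∀ ω, t ≤ τ ω)
    (hτT : ∀ ω, τ ω ≤ T) :
    μ[fun ω => f (τ ω) ω | 𝒻 t] =ᵐ[μ]
      martingalePart f 𝒻 μ t + μ[fun ω => predictablePart f 𝒻 μ (τ ω) ω | 𝒻 t] := by
  have hbdd : ∀ ω, (τ ω : WithTop ℕ) ≤ T := fun ω => WithTop.coe_le_coe.mpr (hτT ω)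
  have hsplit : (fun ω => f (τ ω) ω) = (fun ω => martingalePart f 𝒻 μ (τ ω) ω) +
      fun ω => predictablePart f 𝒻 μ (τ ω) ω := by
    funext ω
    simp [martingalePart]
  rw [hsplit]
  refine (condExp_add (integrable_stoppedValue ℕ hτ (integrable_martingalePart hint) hbdd)
    (integrable_stoppedValue ℕ hτ integrable_predictablePart hbdd) _).trans ?_
  filter_upwards
    [(martingale_martingalePart hf hint).condExp_stoppedValue_ae_eq_of_const_le hτ htτ hτT]
    with ω hω
  exact congrArg (· + _) hω

theorem condExp_stoppedValue_ae_eq_of_predictablePart_eq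
    (hf : StronglyAdapted 𝒻 f) (hint : ∀ n, Integrable (f n) μ)
    (hτ : IsStoppingTime 𝒻 (fun ω => (τ ω : WithTop ℕ))) (htτ : ∀ ω, t ≤ τ ω)
    (hτT : ∀ ω, τ ω ≤ T)
    (hA : ∀ᵐ ω ∂μ, predictablePart f 𝒻 μ (τ ω) ω = predictablePart f 𝒻 μ t ω) :
    μ[fun ω => f (τ ω) ω | 𝒻 t] =ᵐ[μ] f t := by
  have hAt : μ[predictablePart f 𝒻 μ t | 𝒻 t] = predictablePart f 𝒻 μ t :=
    condExp_of_stronglyMeasurable (𝒻.le t) (stronglyAdapted_predictablePart' t)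
      (integrable_predictablePart t)
  filter_upwards [condExp_stoppedValue_ae_eq_martingalePart_add hf hint hτ htτ hτT,
    hAt ▸ condExp_congr_ae (m := 𝒻 t) hA] with ω hω hωA
  simp [hω, hωA, martingalePart]

theorem condExp_stoppedValue_ae_le_of_predictablePart_le {f : ℕ → Ω → ℝ}
    (hf : StronglyAdapted 𝒻 f) (hint : ∀ n, Integrable (f n) μ)
    (hτ : IsStoppingTime 𝒻 (fun ω => (τ ω : WithTop ℕ))) (htτ : ∀ ω, t ≤ τ ω)
    (hτT : ∀ ω, τ ω ≤ T)
    (hA : ∀ᵐ ω ∂μ, predictablePart f 𝒻 μ (τ ω) ω ≤ predictablePart f 𝒻 μ t ω) :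
    μ[fun ω => f (τ ω) ω | 𝒻 t] ≤ᵐ[μ] f t := by
  have hAt : μ[predictablePart f 𝒻 μ t | 𝒻 t] = predictablePart f 𝒻 μ t :=
    condExp_of_stronglyMeasurable (𝒻.le t) (stronglyAdapted_predictablePart' t)
      (integrable_predictablePart t)
  have hAτ : Integrable (fun ω => predictablePart f 𝒻 μ (τ ω) ω) μ :=
    integrable_stoppedValue ℕ hτ integrable_predictablePart
      fun ω => WithTop.coe_le_coe.mpr (hτT ω)
  filter_upwards [condExp_stoppedValue_ae_eq_martingalePart_add hf hint hτ htτ hτT,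
    hAt ▸ condExp_mono hAτ (integrable_predictablePart t) hA] with ω hω hωA
  rw [hω, Pi.add_apply]
  calc _ ≤ martingalePart f 𝒻 μ t ω + predictablePart f 𝒻 μ t ω := by gcongr
    _ = f t ω := by simp [martingalePart]

end MeasureTheory

section SnellEnvelope

variable {Ω : Type*} {mΩ : MeasurableSpace Ω}

structure IsSnellEnvelope (μ : Measure Ω) (𝒻 : Filtration ℕ mΩ) (T : ℕ) (Z U : ℕ → Ω → ℝ) :
    Prop where
  terminal : U T = Z T
  recursion : ∀ s < T, U s = fun ω => max (Z s ω) (μ[U (s + 1) | 𝒻 s] ω)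

namespace IsSnellEnvelope

variable {μ : Measure Ω} {𝒻 : Filtration ℕ mΩ} {T : ℕ} {Z U : ℕ → Ω → ℝ}

theorem payoff_le (hU : IsSnellEnvelope μ 𝒻 T Z U) {s : ℕ} (hs : s ≤ T) (ω : Ω) :
    Z s ω ≤ U s ω := by
  rcases hs.lt_or_eq with hs | rfl
  · rw [hU.recursion s hs]
    exact le_max_left _ _
  · rw [hU.terminal]

theorem condExp_succ_le (hU : IsSnellEnvelope μ 𝒻 T Z U) {s : ℕ} (hs : s < T) (ω : Ω) :
    μ[U (s + 1) | 𝒻 s] ω ≤ U s ω := by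
  rw [hU.recursion s hs]
  exact le_max_right _ _

theorem condExp_succ_eq_of_ne (hU : IsSnellEnvelope μ 𝒻 T Z U) {s : ℕ} (hs : s < T) {ω : Ω}
    (hne : U s ω ≠ Z s ω) : μ[U (s + 1) | 𝒻 s] ω = U s ω := by
  have hmax := congrFun (hU.recursion s hs) ω
  rcases le_total (Z s ω) (μ[U (s + 1) | 𝒻 s] ω) with hle | hle
  · rw [hmax, max_eq_right hle]
  · exact absurd (hmax.trans (max_eq_left hle)) hne

theorem stronglyMeasurable (hU : IsSnellEnvelope μ 𝒻 T Z U) (hZ : StronglyAdapted 𝒻 Z) {s : ℕ}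
    (hs : s ≤ T) : StronglyMeasurable[𝒻 s] (U s) := by
  rcases hs.lt_or_eq with hs | rfl
  · rw [hU.recursion s hs]
    exact @StronglyMeasurable.sup Ω ℝ _ _ (𝒻 s) _ _ _ (hZ s) stronglyMeasurable_condExp
  · rw [hU.terminal]
    exact hZ s

theorem integrable (hU : IsSnellEnvelope μ 𝒻 T Z U) (hZ : ∀ s, Integrable (Z s) μ) {s : ℕ}
    (hs : s ≤ T) : Integrable (U s) μ := by
  rcases hs.lt_or_eq with hs | rfl
  · rw [hU.recursion s hs]
    exact (hZ s).sup integrable_condExp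
  · rw [hU.terminal]
    exact hZ s

theorem stronglyAdapted_min (hU : IsSnellEnvelope μ 𝒻 T Z U) (hZ : StronglyAdapted 𝒻 Z) :
    StronglyAdapted 𝒻 fun s => U (min s T) := fun s =>
  (hU.stronglyMeasurable hZ (min_le_right s T)).mono (𝒻.mono (min_le_left s T))

theorem integrable_min (hU : IsSnellEnvelope μ 𝒻 T Z U) (hZ : ∀ s, Integrable (Z s) μ) (s : ℕ) :
    Integrable (U (min s T)) μ :=
  hU.integrable hZ (min_le_right s T)

theorem ae_condExp_min_sub_eq [IsFiniteMeasure μ] (hU : IsSnellEnvelope μ 𝒻 T Z U)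
    (hZ : StronglyAdapted 𝒻 Z) (hZint : ∀ s, Integrable (Z s) μ) :
    ∀ᵐ ω ∂μ, ∀ s < T,
      μ[U (min (s + 1) T) - U (min s T) | 𝒻 s] ω = μ[U (s + 1) | 𝒻 s] ω - U s ω := by
  refine ae_all_iff.mpr fun s => ?_
  rcases lt_or_ge s T with hs | hs
  · rw [min_eq_left hs.le, min_eq_left hs]
    filter_upwards [condExp_sub (hU.integrable hZint hs) (hU.integrable hZint hs.le) (𝒻 s)]
      with ω hω _
    rw [hω, Pi.sub_apply,
      condExp_of_stronglyMeasurable (𝒻.le s) (hU.stronglyMeasurable hZ hs.le)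
        (hU.integrable hZint hs.le)]
  · exact ae_of_all _ fun ω h => absurd h (not_lt.mpr hs)

theorem predictablePart_stopped_le [IsFiniteMeasure μ] (hU : IsSnellEnvelope μ 𝒻 T Z U)
    (hZ : StronglyAdapted 𝒻 Z) (hZint : ∀ s, Integrable (Z s) μ) {τ : Ω → ℕ} {t : ℕ}
    (htτ : ∀ ω, t ≤ τ ω) (hτT : ∀ ω, τ ω ≤ T) :
    ∀ᵐ ω ∂μ, predictablePart (fun s => U (min s T)) 𝒻 μ (τ ω) ω ≤
      predictablePart (fun s => U (min s T)) 𝒻 μ t ω := by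
  filter_upwards [hU.ae_condExp_min_sub_eq hZ hZint] with ω hω
  rw [← sub_nonpos, predictablePart_sub_eq_sum_Ico (htτ ω)]
  refine Finset.sum_nonpos fun s hs => ?_
  have hsT : s < T := (Finset.mem_Ico.mp hs).2.trans_le (hτT ω)
  rw [hω s hsT, sub_nonpos]
  exact hU.condExp_succ_le hsT ω

theorem predictablePart_stopped_eq [IsFiniteMeasure μ] (hU : IsSnellEnvelope μ 𝒻 T Z U)
    (hZ : StronglyAdapted 𝒻 Z) (hZint : ∀ s, Integrable (Z s) μ) {τ : Ω → ℕ} {t : ℕ}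
    (htτ : ∀ ω, t ≤ τ ω) (hτT : ∀ ω, τ ω ≤ T)
    (hcont : ∀ ω s, t ≤ s → s < τ ω → U s ω ≠ Z s ω) :
    ∀ᵐ ω ∂μ, predictablePart (fun s => U (min s T)) 𝒻 μ (τ ω) ω =
      predictablePart (fun s => U (min s T)) 𝒻 μ t ω := by
  filter_upwards [hU.ae_condExp_min_sub_eq hZ hZint] with ω hω
  rw [← sub_eq_zero, predictablePart_sub_eq_sum_Ico (htτ ω)]
  refine Finset.sum_eq_zero fun s hs => ?_
  obtain ⟨hts, hsτ⟩ := Finset.mem_Ico.mp hs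
  have hsT : s < T := hsτ.trans_le (hτT ω)
  rw [hω s hsT, sub_eq_zero]
  exact hU.condExp_succ_eq_of_ne hsT (hcont ω s hts hsτ)

theorem condExp_payoff_stopped_le [IsFiniteMeasure μ] (hU : IsSnellEnvelope μ 𝒻 T Z U)
    (hZ : StronglyAdapted 𝒻 Z) (hZint : ∀ s, Integrable (Z s) μ) {τ : Ω → ℕ}
    (hτ : IsStoppingTime 𝒻 (fun ω => (τ ω : WithTop ℕ))) {t : ℕ} (ht : t ≤ T)
    (htτ : ∀ ω, t ≤ τ ω) (hτT : ∀ ω, τ ω ≤ T) :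
    μ[fun ω => Z (τ ω) ω | 𝒻 t] ≤ᵐ[μ] U t := by
  have hbdd : ∀ ω, (τ ω : WithTop ℕ) ≤ T := fun ω => WithTop.coe_le_coe.mpr (hτT ω)
  have hUτ := condExp_stoppedValue_ae_le_of_predictablePart_le (hU.stronglyAdapted_min hZ)
    (hU.integrable_min hZint) hτ htτ hτT (hU.predictablePart_stopped_le hZ hZint htτ hτT)
  rw [min_eq_left ht] at hUτ
  refine Filter.EventuallyLE.trans (condExp_mono (integrable_stoppedValue ℕ hτ hZint hbdd)
    (integrable_stoppedValue ℕ hτ (hU.integrable_min hZint) hbdd) (ae_of_all _ fun ω => ?_)) hUτ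
  change Z (τ ω) ω ≤ U (min (τ ω) T) ω
  rw [min_eq_left (hτT ω)]
  exact hU.payoff_le (hτT ω) ω

theorem condExp_payoff_stopped_eq [IsFiniteMeasure μ] (hU : IsSnellEnvelope μ 𝒻 T Z U)
    (hZ : StronglyAdapted 𝒻 Z) (hZint : ∀ s, Integrable (Z s) μ) {τ : Ω → ℕ}
    (hτ : IsStoppingTime 𝒻 (fun ω => (τ ω : WithTop ℕ))) {t : ℕ} (ht : t ≤ T)
    (htτ : ∀ ω, t ≤ τ ω) (hτT : ∀ ω, τ ω ≤ T)
    (hcont : ∀ ω s, t ≤ s → s < τ ω → U s ω ≠ Z s ω) (hstop : ∀ ω, U (τ ω) ω = Z (τ ω) ω) :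
    μ[fun ω => Z (τ ω) ω | 𝒻 t] =ᵐ[μ] U t := by
  have h := condExp_stoppedValue_ae_eq_of_predictablePart_eq (hU.stronglyAdapted_min hZ)
    (hU.integrable_min hZint) hτ htτ hτT (hU.predictablePart_stopped_eq hZ hZint htτ hτT hcont)
  have hUτ : (fun ω => U (min (τ ω) T) ω) = fun ω => Z (τ ω) ω :=
    funext fun ω => by rw [min_eq_left (hτT ω), hstop ω]
  rwa [hUτ, min_eq_left ht] at h

end IsSnellEnvelope

end SnellEnvelope

section HittingTime

variable {Ω : Type*} {T t : ℕ} {Z U : ℕ → Ω → ℝ}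

theorem hittingBtwn_sub_eq_sInf (hUT : U T = Z T) (ht : t ≤ T) (ω : Ω) :
    hittingBtwn (fun s ω => U (min s T) ω - Z s ω) {0} t T ω =
      sInf {s : ℕ | t ≤ s ∧ s ≤ T ∧ U s ω = Z s ω} := by
  have hex : ∃ j ∈ Set.Icc t T, U (min j T) ω - Z j ω ∈ ({0} : Set ℝ) :=
    ⟨T, ⟨ht, le_rfl⟩, by simp [hUT]⟩
  rw [hittingBtwn, if_pos hex]
  congr 1
  ext s
  simp only [Set.mem_inter_iff, Set.mem_Icc, Set.mem_ofPred_eq, Set.mem_singleton_iff,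
    sub_eq_zero, and_assoc]
  constructor
  · rintro ⟨hts, hsT, h⟩
    exact ⟨hts, hsT, by rwa [min_eq_left hsT] at h⟩
  · rintro ⟨hts, hsT, h⟩
    exact ⟨hts, hsT, by rwa [min_eq_left hsT]⟩

theorem apply_hittingBtwn_sub_eq (hUT : U T = Z T) (ht : t ≤ T) (ω : Ω) :
    U (hittingBtwn (fun s ω => U (min s T) ω - Z s ω) {0} t T ω) ω =
      Z (hittingBtwn (fun s ω => U (min s T) ω - Z s ω) {0} t T ω) ω := by
  have h := hittingBtwn_mem_set (u := fun s ω => U (min s T) ω - Z s ω) (s := {0}) (ω := ω)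
    ⟨T, ⟨ht, le_rfl⟩, by simp [hUT]⟩
  rwa [Set.mem_singleton_iff, sub_eq_zero, min_eq_left (hittingBtwn_le ω)] at h

theorem ne_of_lt_hittingBtwn_sub {ω : Ω} {s : ℕ} (hts : t ≤ s)
    (hs : s < hittingBtwn (fun s ω => U (min s T) ω - Z s ω) {0} t T ω) : U s ω ≠ Z s ω := by
  have h := notMem_of_lt_hittingBtwn hs hts
  rwa [Set.mem_singleton_iff, sub_eq_zero, min_eq_left (hs.le.trans (hittingBtwn_le ω))] at h

end HittingTime

theorem stmt5_general {Ω : Type*} {mΩ : MeasurableSpace Ω} {μ : Measure Ω} [IsProbabilityMeasure μ]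
    (𝒻 : Filtration ℕ mΩ) (T : ℕ) (Z : ℕ → Ω → ℝ)
    (hadapt : Adapted 𝒻 Z)
    (hbdd : ∀ t, ∃ C : ℝ, ∀ ω, |Z t ω| ≤ C)
    (U : ℕ → Ω → ℝ)
    (hUT : U T = Z T)
    (hU : ∀ t < T, U t = fun ω => max (Z t ω) ((μ[U (t + 1) | 𝒻 t]) ω))
    (t : ℕ) (ht : t ≤ T)
    (τstar : Ω → ℕ)
    (hτstar : ∀ ω, τstar ω = sInf {s : ℕ | t ≤ s ∧ s ≤ T ∧ U s ω = Z s ω}) :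
    IsStoppingTime 𝒻 (fun ω => (τstar ω : WithTop ℕ)) ∧
    (∀ ω, t ≤ τstar ω ∧ τstar ω ≤ T) ∧
    (μ[fun ω' => Z (τstar ω') ω' | 𝒻 t] =ᵐ[μ] U t) ∧
    (∀ τ : Ω → ℕ, IsStoppingTime 𝒻 (fun ω => (τ ω : WithTop ℕ)) → (∀ ω, t ≤ τ ω) → (∀ ω, τ ω ≤ T) →
      ∀ᵐ ω ∂μ, (μ[fun ω' => Z (τ ω') ω' | 𝒻 t]) ω ≤
        (μ[fun ω' => Z (τstar ω') ω' | 𝒻 t]) ω) := by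
  have hZ : StronglyAdapted 𝒻 Z := hadapt.stronglyAdapted
  have hZint : ∀ s, Integrable (Z s) μ := fun s =>
    let ⟨C, hC⟩ := hbdd s
    .of_bound ((hZ s).mono (𝒻.le s)).aestronglyMeasurable C (ae_of_all _ hC)
  have hSnell : IsSnellEnvelope μ 𝒻 T Z U := ⟨hUT, hU⟩
  obtain rfl : τstar = hittingBtwn (fun s ω => U (min s T) ω - Z s ω) {0} t T :=
    funext fun ω => (hτstar ω).trans (hittingBtwn_sub_eq_sInf hUT ht ω).symm
  have hstop := Adapted.isStoppingTime_hittingBtwn (n := t) (n' := T)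
    (fun s => (hSnell.stronglyAdapted_min hZ s).measurable.sub (hZ s).measurable)
    (measurableSet_singleton 0)
  have hIcc := hittingBtwn_mem_Icc (u := fun s ω => U (min s T) ω - Z s ω) (s := {0}) ht
  have hopt := hSnell.condExp_payoff_stopped_eq hZ hZint hstop ht (fun ω => (hIcc ω).1)
    (fun ω => (hIcc ω).2) (fun _ _ => ne_of_lt_hittingBtwn_sub) (apply_hittingBtwn_sub_eq hUT ht)
  refine ⟨hstop, hIcc, hopt, fun τ hτ htτ hτT => ?_⟩
  filter_upwards [hSnell.condExp_payoff_stopped_le hZ hZint hτ ht htτ hτT, hopt] with ω hle heq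
  exact heq ▸ hle

/-- The first time the payoff touches the Snell envelope after `t` is a stopping time, lies in
`[t, T]`, and its conditional expected payoff attains the Snell envelope `U t`; in particular it
attains the supremum of conditional expected payoffs over stopping times valued in `[t, T]`. -/
theorem stmt5 {Ω : Type*} {mΩ : MeasurableSpace Ω} {μ : Measure Ω} [IsProbabilityMeasure μ]
    (𝒻 : Filtration ℕ mΩ) (T : ℕ) (Z : ℕ → Ω → ℝ)
    (hadapt : Adapted 𝒻 Z)
    (hmeas : ∀ t, Measurable (Z t))
    (hbdd : ∀ t, ∃ C : ℝ, ∀ ω, |Z t ω| ≤ C)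
    (U : ℕ → Ω → ℝ)
    (hUT : U T = Z T)
    (hU : ∀ t < T, U t = fun ω => max (Z t ω) ((μ[U (t + 1) | 𝒻 t]) ω))
    (t : ℕ) (ht : t ≤ T)
    (τstar : Ω → ℕ)
    (hτstar : ∀ ω, τstar ω = sInf {s : ℕ | t ≤ s ∧ s ≤ T ∧ U s ω = Z s ω}) :
    IsStoppingTime 𝒻 (fun ω => (τstar ω : WithTop ℕ)) ∧
    (∀ ω, t ≤ τstar ω ∧ τstar ω ≤ T) ∧
    (μ[fun ω' => Z (τstar ω') ω' | 𝒻 t] =ᵐ[μ] U t) ∧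
    (∀ τ : Ω → ℕ, IsStoppingTime 𝒻 (fun ω => (τ ω : WithTop ℕ)) → (∀ ω, t ≤ τ ω) → (∀ ω, τ ω ≤ T) →
      ∀ᵐ ω ∂μ, (μ[fun ω' => Z (τ ω') ω' | 𝒻 t]) ω ≤
        (μ[fun ω' => Z (τstar ω') ω' | 𝒻 t]) ω) :=
  stmt5_general 𝒻 T Z hadapt hbdd U hUT hU t ht τstar hτstar
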